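/- Let (E,H,F,X,Y) be an osp(1|2)-representation on a complex vector space W on which the Casimir operator Ω is zero. Then W decomposes as the direct sum W = W⁺ ⊕ W⁻, where W⁺ = ker(Σ − (1/2)·id) and W⁻ = ker(Σ + (1/2)·id) are the eigenspaces of the super-Casimir Σ; moreover the sl(2) Casimir operator Ω₀ = E∘F + F∘E + (1/2)·H∘H acts as 0 on W⁺ and as the scalar −1/2 on W⁻. -/

import Mathlib

/-- An `osp(1|2)`-representation on a complex vector space `W`: a 5-tuple of
endomorphisms `(E,H,F,X,Y)` satisfying the twelve defining relations of `osp(1|2)`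
realized by ungraded operators. -/
def IsOspRep {W : Type*} [AddCommGroup W] [Module ℂ W]
    (E H F X Y : Module.End ℂ W) : Prop :=
  H * E - E * H = (2 : ℂ) • E ∧
  H * F - F * H = (-2 : ℂ) • F ∧
  E * F - F * E = H ∧
  H * X - X * H = X ∧
  E * X - X * E = 0 ∧
  F * X - X * F = -Y ∧
  H * Y - Y * H = -Y ∧
  E * Y - Y * E = -X ∧
  F * Y - Y * F = 0 ∧
  X * X = E ∧
  X * Y + Y * X = H ∧
  Y * Y = -F

/-- The Casimir operator `Ω = E∘F + F∘E + (1/2)·H∘H + (1/2)·(Y∘X − X∘Y)`. -/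
noncomputable def OmegaOsp {W : Type*} [AddCommGroup W] [Module ℂ W]
    (E H F X Y : Module.End ℂ W) : Module.End ℂ W :=
  E * F + F * E + (1/2 : ℂ) • (H * H) + (1/2 : ℂ) • (Y * X - X * Y)

/-- The super-Casimir operator `Σ = X∘Y − Y∘X + (1/2)·id`. -/
noncomputable def SigmaOsp {W : Type*} [AddCommGroup W] [Module ℂ W]
    (X Y : Module.End ℂ W) : Module.End ℂ W :=
  X * Y - Y * X + (1/2 : ℂ) • (1 : Module.End ℂ W)

/-! Writing `S = XY − YX`, the relations give `S² + S = 2Ω`, i.e. `Σ² = 2Ω + 1/4`. So when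
`Ω = 0` the super-Casimir satisfies `(Σ − 1/2)(Σ + 1/2) = 0`, a product of coprime linear
factors, whence `W = ker(Σ − 1/2) ⊕ ker(Σ + 1/2)`. Finally `Ω₀ = Ω + S/2 = Ω + (Σ − 1/2)/2`,
which is `0` on `W⁺` and `−1/2` on `W⁻`. -/

open Polynomial

theorem Module.End.isCompl_ker_sub_smul_one {R M : Type*} [CommRing R] [AddCommGroup M]
    [Module R M] (T : Module.End R M) {a b : R} (hab : IsUnit (a - b))
    (hT : (T - a • 1) * (T - b • 1) = 0) :
    IsCompl (LinearMap.ker (T - a • 1)) (LinearMap.ker (T - b • 1)) := by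
  have aeval_X_sub_C (c : R) : aeval T (X - C c) = T - c • 1 := by
    rw [map_sub, aeval_X, aeval_C, Algebra.algebraMap_eq_smul_one]
  have hcop := isCoprime_X_sub_C_of_isUnit_sub hab
  refine ⟨?_, codisjoint_iff.mpr ?_⟩
  · simpa only [aeval_X_sub_C] using disjoint_ker_aeval_of_isCoprime T hcop
  · rw [← aeval_X_sub_C, ← aeval_X_sub_C, sup_ker_aeval_eq_ker_aeval_mul_of_coprime T hcop,
      aeval_mul, aeval_X_sub_C, aeval_X_sub_C, hT, LinearMap.ker_zero]

section Osp

variable {W : Type*} [AddCommGroup W] [Module ℂ W]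

theorem IsOspRep.sigmaOsp_mul_self {E H F X Y : Module.End ℂ W} (hrep : IsOspRep E H F X Y) :
    SigmaOsp X Y * SigmaOsp X Y = (2 : ℂ) • OmegaOsp E H F X Y + (1/4 : ℂ) • 1 := by
  obtain ⟨-, -, hEF, hHX, -, -, hHY, -, -, hXX, hXY, hYY⟩ := hrep
  have hFE : F * E = E * F - H := by rw [← hEF]; abel
  have hYX : Y * X = H - X * Y := by rw [← hXY]; abel
  have hXH : X * H = H * X - X :=
    calc X * H = H * X - (H * X - X * H) := by abel
      _ = H * X - X := by rw [hHX]
  have hYH : Y * H = H * Y + Y :=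
    calc Y * H = H * Y - (H * Y - Y * H) := by abel
      _ = H * Y + Y := by rw [hHY, sub_neg_eq_add]
  have hXY_sq : X * Y * (X * Y) = H * (X * Y) - X * Y + E * F :=
    calc X * Y * (X * Y) = X * (Y * X) * Y := by noncomm_ring
      _ = X * H * Y - X * X * (Y * Y) := by rw [hYX]; noncomm_ring
      _ = H * (X * Y) - X * Y + E * F := by rw [hXH, hXX, hYY]; noncomm_ring
  have hXY_H : X * Y * H = H * (X * Y) :=
    calc X * Y * H = X * (Y * H) := mul_assoc _ _ _
      _ = X * H * Y + X * Y := by rw [hYH]; noncomm_ring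
      _ = H * (X * Y) := by rw [hXH]; noncomm_ring
  unfold SigmaOsp OmegaOsp
  rw [hFE, hYX]
  calc (X * Y - (H - X * Y) + (1/2 : ℂ) • 1) * (X * Y - (H - X * Y) + (1/2 : ℂ) • 1)
      = (4 : ℂ) • (X * Y * (X * Y)) - (2 : ℂ) • (X * Y * H) - (2 : ℂ) • (H * (X * Y))
          + H * H + (2 : ℂ) • (X * Y) - H + (1/4 : ℂ) • 1 := by
        noncomm_ring
        module
    _ = _ := by rw [hXY_sq, hXY_H]; module

theorem sl2Casimir_eq_omegaOsp_add (E H F X Y : Module.End ℂ W) :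
    E * F + F * E + (1/2 : ℂ) • (H * H)
      = OmegaOsp E H F X Y + (1/2 : ℂ) • (SigmaOsp X Y - (1/2 : ℂ) • 1) := by
  unfold OmegaOsp SigmaOsp
  module

end Osp

/-- If the Casimir `Ω` of an `osp(1|2)`-representation vanishes, then `W` is the direct
sum of the `±1/2`-eigenspaces `W⁺ = ker(Σ − (1/2)·id)` and `W⁻ = ker(Σ + (1/2)·id)` of
the super-Casimir `Σ`; moreover the `sl(2)` Casimir `Ω₀ = E∘F + F∘E + (1/2)·H∘H` acts
as `0` on `W⁺` and as `−1/2` on `W⁻`. -/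
theorem decomposition_from_zero_casimir {W : Type*} [AddCommGroup W] [Module ℂ W]
    (E H F X Y : Module.End ℂ W) (hrep : IsOspRep E H F X Y)
    (hcas : OmegaOsp E H F X Y = 0) :
    IsCompl
      (LinearMap.ker (SigmaOsp X Y - (1/2 : ℂ) • (1 : Module.End ℂ W)))
      (LinearMap.ker (SigmaOsp X Y + (1/2 : ℂ) • (1 : Module.End ℂ W))) ∧
    (∀ v ∈ LinearMap.ker (SigmaOsp X Y - (1/2 : ℂ) • (1 : Module.End ℂ W)),
      (E * F + F * E + (1/2 : ℂ) • (H * H)) v = 0) ∧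
    (∀ v ∈ LinearMap.ker (SigmaOsp X Y + (1/2 : ℂ) • (1 : Module.End ℂ W)),
      (E * F + F * E + (1/2 : ℂ) • (H * H)) v = (-(1/2) : ℂ) • v) := by
  have hSigma : (SigmaOsp X Y - (1/2 : ℂ) • 1) * (SigmaOsp X Y - (-(1/2) : ℂ) • 1) = 0 := by
    calc _ = SigmaOsp X Y * SigmaOsp X Y - (1/4 : ℂ) • 1 := by noncomm_ring; module
      _ = 0 := by rw [hrep.sigmaOsp_mul_self, hcas]; module
  have hsplit := (SigmaOsp X Y).isCompl_ker_sub_smul_one (by norm_num) hSigma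
  rw [neg_smul, sub_neg_eq_add] at hsplit
  refine ⟨hsplit, fun v hv ↦ ?_, fun v hv ↦ ?_⟩
  · rw [sl2Casimir_eq_omegaOsp_add E H F X Y, hcas, zero_add, LinearMap.smul_apply,
      LinearMap.mem_ker.mp hv, smul_zero]
  · have hv' : (SigmaOsp X Y - (1/2 : ℂ) • 1) v = -v := by
      rw [show SigmaOsp X Y - (1/2 : ℂ) • 1 = SigmaOsp X Y + (1/2 : ℂ) • 1 - 1 by module,
        LinearMap.sub_apply, LinearMap.mem_ker.mp hv, Module.End.one_apply, zero_sub]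
    rw [sl2Casimir_eq_omegaOsp_add E H F X Y, hcas, zero_add, LinearMap.smul_apply, hv',
      smul_neg, neg_smul]
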